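/- arXiv:2604.21123 — 3 statements merged into one kernel-verified Lean document; each statement's English description precedes it below -/
import Mathlib

section
/- Suppose A_link > 1 and A_adjacency > A_link·C, and suppose C ≥ Δ(G) + 1. Let (x*, y*) be a global minimizer of H_MGC such that x* is one-hot. Then for every edge {u,v} ∈ E and every color c, x*_{u,c}·x*_{v,c} = 0; that is, no edge of G is monochromatic under x*. -/
open Finset

/-- One-hot penalty term: `A_onehot · ∑_v (1 − ∑_c x_{v,c})²`. -/
noncomputable def Honehot {V : Type*} [Fintype V] (C : ℕ) (Aoh : ℝ)
    (x : V → Fin C → ℝ) : ℝ :=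
  Aoh * ∑ v : V, (1 - ∑ c : Fin C, x v c) ^ 2

/-- Adjacency penalty term: `A_adjacency · ∑_{{u,v}∈E} ∑_c x_{u,c} x_{v,c}`. -/
noncomputable def Hadjacency {V : Type*} [Fintype V] [DecidableEq V]
    (G : SimpleGraph V) [DecidableRel G.Adj] (C : ℕ) (Aadj : ℝ)
    (x : V → Fin C → ℝ) : ℝ :=
  Aadj * ∑ e ∈ G.edgeFinset,
    Sym2.lift ⟨fun u v => ∑ c : Fin C, x u c * x v c,
      fun _ _ => Finset.sum_congr rfl (fun _ _ => mul_comm _ _)⟩ e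

/-- Color-count term: `∑_c y_c`. -/
noncomputable def Hcount (C : ℕ) (y : Fin C → ℝ) : ℝ := ∑ c : Fin C, y c

/-- Linking term: `A_link · ∑_v ∑_c x_{v,c}(1 − y_c)`. -/
noncomputable def Hlink {V : Type*} [Fintype V] (C : ℕ) (Alink : ℝ)
    (x : V → Fin C → ℝ) (y : Fin C → ℝ) : ℝ :=
  Alink * ∑ v : V, ∑ c : Fin C, x v c * (1 - y c)

/-- The one-hot QUBO Hamiltonian for minimum graph coloring. -/
noncomputable def HMGC {V : Type*} [Fintype V] [DecidableEq V]
    (G : SimpleGraph V) [DecidableRel G.Adj] (C : ℕ) (Aoh Aadj Alink : ℝ)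
    (x : V → Fin C → ℝ) (y : Fin C → ℝ) : ℝ :=
  Honehot C Aoh x + Hadjacency G C Aadj x + Hcount C y + Hlink C Alink x y

/-!
Comparing with a proper coloring: since `C ≥ Δ(G) + 1`, the greedy algorithm properly colors `G`
with `C` colors, and the one-hot encoding of that coloring with every color switched on has
energy exactly `C`. A monochromatic edge alone costs `A_adjacency > A_link · C > C`, while every
other term of `H_MGC` is nonnegative at a binary one-hot point, so a minimizer cannot have one.
-/

namespace SimpleGraph

variable {V : Type*} [Fintype V] (G : SimpleGraph V) [DecidableRel G.Adj]

theorem exists_forall_adj_apply_ne (f : V → Fin (G.maxDegree + 1)) (a : V) :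
    ∃ c, ∀ w, G.Adj a w → f w ≠ c := by
  have hcard : #((G.neighborFinset a).image f) < #(univ : Finset (Fin (G.maxDegree + 1))) :=
    calc #((G.neighborFinset a).image f) ≤ #(G.neighborFinset a) := card_image_le
      _ = G.degree a := G.card_neighborFinset_eq_degree a
      _ < #(univ : Finset (Fin (G.maxDegree + 1))) := by
        simpa using Nat.lt_succ_of_le (G.degree_le_maxDegree a)
  obtain ⟨c, -, hc⟩ := exists_mem_notMem_of_card_lt_card hcard
  exact ⟨c, fun w haw hwc => hc (mem_image.2 ⟨w, (G.mem_neighborFinset a w).2 haw, hwc⟩)⟩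

theorem colorable_maxDegree_add_one [DecidableEq V] : G.Colorable (G.maxDegree + 1) := by
  suffices ∀ s : Finset V, ∃ f : V → Fin (G.maxDegree + 1),
      ∀ u ∈ s, ∀ v ∈ s, G.Adj u v → f u ≠ f v by
    obtain ⟨f, hf⟩ := this univ
    exact ⟨Coloring.mk f fun huv => hf _ (mem_univ _) _ (mem_univ _) huv⟩
  intro s
  induction s using Finset.induction with
  | empty => exact ⟨fun _ => 0, by simp⟩
  | insert a s ha ih =>
    obtain ⟨f, hf⟩ := ih
    obtain ⟨c, hc⟩ := G.exists_forall_adj_apply_ne f a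
    refine ⟨Function.update f a c, fun u hu v hv huv => ?_⟩
    simp only [Function.update_apply]
    split_ifs with hua hva hva
    · subst hua hva
      exact absurd huv (G.irrefl)
    · subst hua
      exact (hc v huv).symm
    · subst hva
      exact hc u huv.symm
    · exact hf u ((mem_insert.1 hu).resolve_left hua) v ((mem_insert.1 hv).resolve_left hva) huv

end SimpleGraph

def oneHot {V : Type*} {C : ℕ} (f : V → Fin C) : V → Fin C → ℝ :=
  fun v c => if f v = c then 1 else 0

theorem oneHot_eq_zero_or_eq_one {V : Type*} {C : ℕ} (f : V → Fin C) (v : V) (c : Fin C) :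
    oneHot f v c = 0 ∨ oneHot f v c = 1 := by
  unfold oneHot
  split_ifs <;> simp

theorem sum_oneHot {V : Type*} {C : ℕ} (f : V → Fin C) (v : V) : ∑ c, oneHot f v c = 1 := by
  simp [oneHot]

section Hamiltonian

variable {V : Type*} [Fintype V] {C : ℕ}

theorem Honehot_eq_zero {Aoh : ℝ} {x : V → Fin C → ℝ} (hx : ∀ v, ∑ c, x v c = 1) :
    Honehot C Aoh x = 0 := by
  simp [Honehot, hx]

theorem Hcount_nonneg {y : Fin C → ℝ} (hy : ∀ c, 0 ≤ y c) : 0 ≤ Hcount C y :=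
  sum_nonneg fun c _ => hy c

theorem Hcount_one : Hcount C 1 = C := by
  simp [Hcount]

theorem Hlink_nonneg {Alink : ℝ} {x : V → Fin C → ℝ} {y : Fin C → ℝ} (hA : 0 ≤ Alink)
    (hx : ∀ v c, 0 ≤ x v c) (hy : ∀ c, y c ≤ 1) : 0 ≤ Hlink C Alink x y :=
  mul_nonneg hA <| sum_nonneg fun v _ => sum_nonneg fun c _ =>
    mul_nonneg (hx v c) (sub_nonneg.2 (hy c))

theorem Hlink_one (Alink : ℝ) (x : V → Fin C → ℝ) : Hlink C Alink x 1 = 0 := by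
  simp [Hlink]

variable [DecidableEq V] {G : SimpleGraph V} [DecidableRel G.Adj] {Aadj : ℝ}
  {x : V → Fin C → ℝ}

theorem Hadjacency_eq_zero_of_forall_adj (h : ∀ u v, G.Adj u v → ∑ c, x u c * x v c = 0) :
    Hadjacency G C Aadj x = 0 := by
  rw [Hadjacency, sum_eq_zero, mul_zero]
  intro e he
  induction e using Sym2.ind with
  | _ u v => exact h u v (G.mem_edgeFinset.1 he)

theorem mul_le_Hadjacency (hA : 0 ≤ Aadj) (hx : ∀ v c, 0 ≤ x v c) {u v : V} (huv : G.Adj u v)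
    (c : Fin C) : Aadj * (x u c * x v c) ≤ Hadjacency G C Aadj x := by
  have hterm : ∀ e ∈ G.edgeFinset, 0 ≤ Sym2.lift ⟨fun a b => ∑ c : Fin C, x a c * x b c,
      fun _ _ => sum_congr rfl fun _ _ => mul_comm _ _⟩ e := by
    intro e _
    induction e using Sym2.ind with
    | _ a b => exact (sum_nonneg fun c _ => mul_nonneg (hx a c) (hx b c) :
        0 ≤ ∑ c, x a c * x b c)
  refine mul_le_mul_of_nonneg_left ?_ hA
  calc x u c * x v c ≤ ∑ c, x u c * x v c :=
        single_le_sum (fun c _ => mul_nonneg (hx u c) (hx v c)) (mem_univ c)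
    _ = Sym2.lift _ s(u, v) := rfl
    _ ≤ _ := single_le_sum hterm (G.mem_edgeFinset.2 huv)

theorem Hadjacency_oneHot_coloring (f : G.Coloring (Fin C)) :
    Hadjacency G C Aadj (oneHot f) = 0 :=
  Hadjacency_eq_zero_of_forall_adj fun u v huv => sum_eq_zero fun c _ => by
    have := f.valid huv
    unfold oneHot
    split_ifs <;> simp_all

theorem HMGC_oneHot_coloring_one (Aoh Alink : ℝ) (f : G.Coloring (Fin C)) :
    HMGC G C Aoh Aadj Alink (oneHot f) 1 = C := by
  rw [HMGC, Honehot_eq_zero (sum_oneHot f), Hadjacency_oneHot_coloring, Hcount_one, Hlink_one]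
  ring

theorem mul_le_HMGC {Aoh Alink : ℝ} {y : Fin C → ℝ} (hAadj : 0 ≤ Aadj) (hAlink : 0 ≤ Alink)
    (hx : ∀ v c, 0 ≤ x v c) (hx₁ : ∀ v, ∑ c, x v c = 1) (hy₀ : ∀ c, 0 ≤ y c) (hy₁ : ∀ c, y c ≤ 1)
    {u v : V} (huv : G.Adj u v) (c : Fin C) :
    Aadj * (x u c * x v c) ≤ HMGC G C Aoh Aadj Alink x y := by
  have := mul_le_Hadjacency hAadj hx huv c
  have := Hcount_nonneg hy₀
  have := Hlink_nonneg hAlink hx hy₁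
  rw [HMGC, Honehot_eq_zero hx₁]
  linarith

end Hamiltonian

theorem minimizer_proper_coloring_general
    {V : Type*} [Fintype V] [DecidableEq V]
    (G : SimpleGraph V) [DecidableRel G.Adj]
    (C : ℕ) (hCdeg : G.maxDegree + 1 ≤ C)
    (Aoh Aadj Alink : ℝ)
    (h1 : 1 < Alink)
    (h2 : Alink * (C : ℝ) < Aadj)
    (x : V → Fin C → ℝ) (y : Fin C → ℝ)
    (hx : ∀ v c, x v c = 0 ∨ x v c = 1) (hy : ∀ c, y c = 0 ∨ y c = 1)
    (honehot : ∀ v : V, ∑ c : Fin C, x v c = 1)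
    (hmin : ∀ (x' : V → Fin C → ℝ) (y' : Fin C → ℝ),
      (∀ v c, x' v c = 0 ∨ x' v c = 1) → (∀ c, y' c = 0 ∨ y' c = 1) →
      HMGC G C Aoh Aadj Alink x y ≤ HMGC G C Aoh Aadj Alink x' y') :
    ∀ u v : V, G.Adj u v → ∀ c : Fin C, x u c * x v c = 0 := by
  intro u v huv c
  obtain ⟨f⟩ := G.colorable_maxDegree_add_one.mono hCdeg
  have hx₀ : ∀ v c, 0 ≤ x v c := fun v c => by rcases hx v c with h | h <;> simp [h]
  have hy₀ : ∀ c, 0 ≤ y c := fun c => by rcases hy c with h | h <;> simp [h]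
  have hy₁ : ∀ c, y c ≤ 1 := fun c => by rcases hy c with h | h <;> simp [h]
  have hC_lt : (C : ℝ) < Aadj := by nlinarith [C.cast_nonneg (α := ℝ)]
  have hupper := hmin (oneHot f) 1 (oneHot_eq_zero_or_eq_one f) fun _ => Or.inr rfl
  rw [HMGC_oneHot_coloring_one] at hupper
  have hlower : Aadj * (x u c * x v c) ≤ HMGC G C Aoh Aadj Alink x y :=
    mul_le_HMGC (by linarith) (by linarith) hx₀ honehot hy₀ hy₁ huv c
  have hlt : x u c * x v c < 1 := by
    by_contra! hge
    nlinarith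
  rcases hx u c with h | h <;> rcases hx v c with h' | h' <;> simp_all

/-- If `A_link > 1`, `A_adjacency > A_link·C`, and `C ≥ Δ(G)+1`, then any global
minimizer of `H_MGC` whose `x`-part is one-hot has no monochromatic edge. -/
theorem minimizer_proper_coloring
    {V : Type*} [Fintype V] [DecidableEq V] [Nonempty V]
    (G : SimpleGraph V) [DecidableRel G.Adj]
    (C : ℕ) (hC : 1 ≤ C) (hCdeg : G.maxDegree + 1 ≤ C)
    (Aoh Aadj Alink : ℝ)
    (hAohpos : 0 < Aoh) (hAadjpos : 0 < Aadj) (hAlinkpos : 0 < Alink)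
    (h1 : 1 < Alink)
    (h2 : Alink * (C : ℝ) < Aadj)
    (x : V → Fin C → ℝ) (y : Fin C → ℝ)
    (hx : ∀ v c, x v c = 0 ∨ x v c = 1) (hy : ∀ c, y c = 0 ∨ y c = 1)
    (honehot : ∀ v : V, ∑ c : Fin C, x v c = 1)
    (hmin : ∀ (x' : V → Fin C → ℝ) (y' : Fin C → ℝ),
      (∀ v c, x' v c = 0 ∨ x' v c = 1) → (∀ c, y' c = 0 ∨ y' c = 1) →
      HMGC G C Aoh Aadj Alink x y ≤ HMGC G C Aoh Aadj Alink x' y') :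
    ∀ u v : V, G.Adj u v → ∀ c : Fin C, x u c * x v c = 0 :=
  minimizer_proper_coloring_general G C hCdeg Aoh Aadj Alink h1 h2 x y hx hy honehot hmin
end

section
/- Suppose A_link > 1, A_adjacency > A_link·C, and A_onehot > A_adjacency·m + A_link·C. Then every global minimizer (x*, y*) of H_MGC satisfies the one-hot constraint: ∑_{c=1}^{C} x*_{v,c} = 1 for every vertex v ∈ V. -/
open Finset

/-- If `A_link > 1`, `A_adjacency > A_link·C`, and
`A_onehot > A_adjacency·m + A_link·C`, then every global minimizer of `H_MGC`
satisfies the one-hot constraint. -/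
theorem minimizer_onehot
    {V : Type*} [Fintype V] [DecidableEq V] [Nonempty V]
    (G : SimpleGraph V) [DecidableRel G.Adj]
    (C : ℕ) (hC : 1 ≤ C)
    (Aoh Aadj Alink : ℝ)
    (hAohpos : 0 < Aoh) (hAadjpos : 0 < Aadj) (hAlinkpos : 0 < Alink)
    (h1 : 1 < Alink)
    (h2 : Alink * (C : ℝ) < Aadj)
    (h3 : Aadj * (G.edgeFinset.card : ℝ) + Alink * (C : ℝ) < Aoh)
    (x : V → Fin C → ℝ) (y : Fin C → ℝ)
    (hx : ∀ v c, x v c = 0 ∨ x v c = 1) (hy : ∀ c, y c = 0 ∨ y c = 1)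
    (hmin : ∀ (x' : V → Fin C → ℝ) (y' : Fin C → ℝ),
      (∀ v c, x' v c = 0 ∨ x' v c = 1) → (∀ c, y' c = 0 ∨ y' c = 1) →
      HMGC G C Aoh Aadj Alink x y ≤ HMGC G C Aoh Aadj Alink x' y') :
    ∀ v : V, ∑ c : Fin C, x v c = 1 := by

  intro v0
  by_contra hne
  have hx0 : ∀ v c, (0:ℝ) ≤ x v c := by
    intro v c; rcases hx v c with h|h <;> simp [h]
  -- the violated row has square penalty at least 1
  have hsq : (1:ℝ) ≤ (1 - ∑ c : Fin C, x v0 c)^2 := by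
    have : ∑ c : Fin C, x v0 c = ∑ c : Fin C, (if x v0 c = 1 then (1:ℝ) else 0) := by
      refine Finset.sum_congr rfl fun c _ => ?_
      rcases hx v0 c with h|h <;> simp [h]
    rw [this, Finset.sum_boole] at hne ⊢
    set n := (Finset.univ.filter fun c => x v0 c = 1).card with hn
    have hn1 : n ≠ 1 := by intro h; apply hne; rw [h]; norm_num
    rcases Nat.lt_or_ge n 2 with h|h
    · have : n = 0 := by omega
      simp [this]
    · have h2 : (2:ℝ) ≤ (n:ℝ) := by exact_mod_cast h
      nlinarith
  -- lower bound: HMGC x y ≥ Aoh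
  have hlow : Aoh ≤ HMGC G C Aoh Aadj Alink x y := by
    have h1' : (1:ℝ) ≤ ∑ v : V, (1 - ∑ c : Fin C, x v c) ^ 2 := by
      calc (1:ℝ) ≤ (1 - ∑ c : Fin C, x v0 c) ^ 2 := hsq
        _ ≤ ∑ v : V, (1 - ∑ c : Fin C, x v c) ^ 2 :=
          Finset.single_le_sum (f := fun v => (1 - ∑ c : Fin C, x v c)^2) (fun v _ => sq_nonneg _) (Finset.mem_univ v0)
    have hoh : Aoh ≤ Honehot C Aoh x := by
      unfold Honehot
      nlinarith
    have hadj : 0 ≤ Hadjacency G C Aadj x := by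
      unfold Hadjacency
      refine mul_nonneg hAadjpos.le (Finset.sum_nonneg fun e he => ?_)
      induction e using Sym2.ind with
      | _ u v =>
        rw [Sym2.lift_mk]
        show (0:ℝ) ≤ ∑ c : Fin C, x u c * x v c
        exact Finset.sum_nonneg fun c _ => mul_nonneg (hx0 u c) (hx0 v c)
    have hcnt : 0 ≤ Hcount C y := by
      unfold Hcount
      refine Finset.sum_nonneg fun c _ => ?_
      rcases hy c with h|h <;> simp [h]
    have hlink : 0 ≤ Hlink C Alink x y := by
      unfold Hlink
      refine mul_nonneg hAlinkpos.le (Finset.sum_nonneg fun v _ =>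
        Finset.sum_nonneg fun c _ => mul_nonneg (hx0 v c) ?_)
      rcases hy c with h|h <;> simp [h]
    unfold HMGC
    linarith
  -- candidate: color everything with color 0, all colors used
  set c0 : Fin C := ⟨0, hC⟩ with hc0
  set x' : V → Fin C → ℝ := fun _ c => if c = c0 then 1 else 0 with hx'
  set y' : Fin C → ℝ := fun _ => 1 with hy'
  have hx'01 : ∀ v c, x' v c = 0 ∨ x' v c = 1 := by
    intro v c; by_cases h : c = c0 <;> simp [hx', h]
  have hy'01 : ∀ c, y' c = 0 ∨ y' c = 1 := fun c => Or.inr rfl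
  have hub : HMGC G C Aoh Aadj Alink x' y' = Aadj * (G.edgeFinset.card : ℝ) + C := by
    have hrow : ∀ v : V, ∑ c : Fin C, x' v c = 1 := by
      intro v; simp [hx']
    have hoh : Honehot C Aoh x' = 0 := by
      have hz : ∀ v : V, (1 - ∑ c : Fin C, x' v c)^2 = 0 := fun v => by rw [hrow v]; ring
      unfold Honehot
      rw [Finset.sum_congr rfl fun v _ => hz v, Finset.sum_const_zero, mul_zero]
    have hadj : Hadjacency G C Aadj x' = Aadj * (G.edgeFinset.card : ℝ) := by
      unfold Hadjacency
      congr 1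
      rw [Finset.card_eq_sum_ones, Nat.cast_sum]
      refine Finset.sum_congr rfl fun e he => ?_
      induction e using Sym2.ind with
      | _ u v =>
        rw [Sym2.lift_mk]
        simp [hx', ite_and]
    have hcnt : Hcount C y' = (C : ℝ) := by
      unfold Hcount; simp [hy']
    have hlink : Hlink C Alink x' y' = 0 := by
      unfold Hlink; simp [hy']
    unfold HMGC
    rw [hoh, hadj, hcnt, hlink]; ring
  have hle := hmin x' y' hx'01 hy'01
  rw [hub] at hle
  have : (C:ℝ) ≤ Alink * C := by nlinarith [Nat.cast_nonneg (α := ℝ) C]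
  linarith
end

section
/- Suppose A_link > 1, A_adjacency > A_link·C, A_onehot > A_adjacency·m + A_link·C, and C ≥ Δ(G) + 1. Then the minimum of H_MGC(x,y) over all binary assignments (x,y) ∈ {0,1}^{V×[C]} × {0,1}^{[C]} equals the minimum, over all proper colorings f of G with at most C colors, of the number |f(V)| of distinct colors used by f. -/
open Finset

set_option maxHeartbeats 800000 in

lemma greedy_coloring {V : Type*} [Fintype V] [DecidableEq V]
    (G : SimpleGraph V) [DecidableRel G.Adj] (C : ℕ) (hC : 1 ≤ C)
    (hCdeg : G.maxDegree + 1 ≤ C) :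
    ∃ f : V → Fin C, ∀ u v, G.Adj u v → f u ≠ f v := by
  classical
  have key : ∀ s : Finset V, ∃ f : V → Fin C,
      ∀ u ∈ s, ∀ v ∈ s, G.Adj u v → f u ≠ f v := by
    intro s
    induction s using Finset.induction_on with
    | empty => exact ⟨fun _ => ⟨0, hC⟩, by simp⟩
    | @insert a s ha ih =>
      obtain ⟨f, hf⟩ := ih
      set T : Finset (Fin C) := ((G.neighborFinset a) ∩ s).image f with hT
      have hTcard : T.card < C := by
        calc T.card ≤ ((G.neighborFinset a) ∩ s).card := Finset.card_image_le
        _ ≤ (G.neighborFinset a).card := Finset.card_le_card Finset.inter_subset_left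
        _ = G.degree a := G.card_neighborFinset_eq_degree a
        _ ≤ G.maxDegree := G.degree_le_maxDegree a
        _ < C := by omega
      have hex : ∃ c : Fin C, c ∉ T := by
        by_contra h
        push_neg at h
        have : (Finset.univ : Finset (Fin C)).card ≤ T.card :=
          Finset.card_le_card (fun c _ => h c)
        simp at this
        omega
      obtain ⟨c, hc⟩ := hex
      refine ⟨Function.update f a c, ?_⟩
      intro u hu v hv huv
      have hune : u ≠ v := G.ne_of_adj huv
      rcases Finset.mem_insert.1 hu with hu1 | hu1 <;>
        rcases Finset.mem_insert.1 hv with hv1 | hv1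
      · exact absurd (hu1.trans hv1.symm) hune
      · subst hu1
        have hva : v ≠ u := fun h => ha (h ▸ hv1)
        rw [Function.update_self, Function.update_of_ne hva]
        intro h
        exact hc (h ▸ Finset.mem_image_of_mem f
          (Finset.mem_inter.2 ⟨(G.mem_neighborFinset _ _).2 huv, hv1⟩))
      · subst hv1
        have hua : u ≠ v := fun h => ha (h ▸ hu1)
        rw [Function.update_self, Function.update_of_ne hua]
        intro h
        exact hc (h ▸ Finset.mem_image_of_mem f
          (Finset.mem_inter.2 ⟨(G.mem_neighborFinset _ _).2 huv.symm, hu1⟩))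
      · have h1 : u ≠ a := fun h => ha (h ▸ hu1)
        have h2 : v ≠ a := fun h => ha (h ▸ hv1)
        rw [Function.update_of_ne h1, Function.update_of_ne h2]
        exact hf u hu1 v hv1 huv
  obtain ⟨f, hf⟩ := key Finset.univ
  exact ⟨f, fun u v h => hf u (Finset.mem_univ u) v (Finset.mem_univ v) h⟩

lemma HMGC_of_coloring {V : Type*} [Fintype V] [DecidableEq V]
    (G : SimpleGraph V) [DecidableRel G.Adj] (C : ℕ)
    (Aoh Aadj Alink : ℝ) (f : V → Fin C)
    (hf : ∀ u v, G.Adj u v → f u ≠ f v) :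
    HMGC G C Aoh Aadj Alink (fun v c => if f v = c then 1 else 0)
      (fun c => if c ∈ Finset.univ.image f then 1 else 0)
      = ((Finset.univ.image f).card : ℝ) := by
  classical
  have h1 : Honehot C Aoh (fun v c => if f v = c then 1 else 0) = 0 := by
    simp [Honehot, Finset.sum_ite_eq]
  have h2 : Hadjacency G C Aadj (fun v c => if f v = c then 1 else 0) = 0 := by
    rw [Hadjacency]
    rw [Finset.sum_eq_zero, mul_zero]
    intro e he
    induction e using Sym2.ind with
    | _ u v =>
      have hadj : G.Adj u v := by
        rwa [SimpleGraph.mem_edgeFinset, SimpleGraph.mem_edgeSet] at he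
      have hne := hf u v hadj
      simp only [Sym2.lift_mk]
      refine Finset.sum_eq_zero (fun c _ => ?_)
      by_cases h : f u = c
      · have : f v ≠ c := fun h' => hne (h.trans h'.symm)
        simp [h, this]
      · simp [h]
  have h3 : Hcount C (fun c => if c ∈ Finset.univ.image f then 1 else 0)
      = ((Finset.univ.image f).card : ℝ) := by
    rw [Hcount]
    rw [Finset.sum_ite_mem, Finset.univ_inter, Finset.sum_const, nsmul_eq_mul, mul_one]
  have h4 : Hlink C Alink (fun v c => if f v = c then 1 else 0)
      (fun c => if c ∈ Finset.univ.image f then 1 else 0) = 0 := by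
    rw [Hlink]
    rw [Finset.sum_eq_zero, mul_zero]
    intro v _
    refine Finset.sum_eq_zero (fun c _ => ?_)
    by_cases h : f v = c
    · have : c ∈ Finset.univ.image f := h ▸ Finset.mem_image_of_mem f (mem_univ v)
      simp [h, this]
    · simp [h]
  rw [HMGC, h1, h2, h3, h4]; ring


set_option maxHeartbeats 800000 in
lemma HMGC_lower_bound {V : Type*} [Fintype V] [DecidableEq V] [Nonempty V]
    (G : SimpleGraph V) [DecidableRel G.Adj]
    (C : ℕ) (hC : 1 ≤ C)
    (Aoh Aadj Alink : ℝ)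
    (hAohpos : 0 < Aoh) (hAadjpos : 0 < Aadj) (hAlinkpos : 0 < Alink)
    (h1 : 1 < Alink)
    (h2 : Alink * (C : ℝ) < Aadj)
    (h3 : Aadj * (G.edgeFinset.card : ℝ) + Alink * (C : ℝ) < Aoh)
    (kmin : ℕ)
    (hkC : (kmin : ℝ) ≤ (C : ℝ))
    (hleast : ∀ f : V → Fin C, (∀ u v, G.Adj u v → f u ≠ f v) →
      (kmin : ℝ) ≤ ((Finset.univ.image f).card : ℝ))
    (x : V → Fin C → ℝ) (y : Fin C → ℝ)
    (hx01 : ∀ v c, x v c = 0 ∨ x v c = 1) (hy01 : ∀ c, y c = 0 ∨ y c = 1) :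
    (kmin : ℝ) ≤ HMGC G C Aoh Aadj Alink x y := by
  classical
  have hx0 : ∀ v c, 0 ≤ x v c := fun v c => by rcases hx01 v c with h | h <;> simp [h]
  have hy0 : ∀ c, 0 ≤ y c := fun c => by rcases hy01 c with h | h <;> simp [h]
  have hy1 : ∀ c, y c ≤ 1 := fun c => by rcases hy01 c with h | h <;> simp [h]
  -- basic nonnegativity facts
  have hOn0 : 0 ≤ Honehot C Aoh x :=
    mul_nonneg hAohpos.le (Finset.sum_nonneg fun v _ => sq_nonneg _)
  have hedgeterm : ∀ e : Sym2 V, 0 ≤ Sym2.lift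
      ⟨fun u v => ∑ c : Fin C, x u c * x v c,
        fun _ _ => Finset.sum_congr rfl (fun _ _ => mul_comm _ _)⟩ e := by
    intro e
    induction e using Sym2.ind with
    | _ u v =>
      simp only [Sym2.lift_mk]
      exact Finset.sum_nonneg fun c _ => mul_nonneg (hx0 u c) (hx0 v c)
  have hAd0 : 0 ≤ Hadjacency G C Aadj x :=
    mul_nonneg hAadjpos.le (Finset.sum_nonneg fun e _ => hedgeterm e)
  have hCo0 : 0 ≤ Hcount C y := Finset.sum_nonneg fun c _ => hy0 c
  have hLi0 : 0 ≤ Hlink C Alink x y :=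
    mul_nonneg hAlinkpos.le (Finset.sum_nonneg fun v _ => Finset.sum_nonneg
      fun c _ => mul_nonneg (hx0 v c) (by linarith [hy1 c]))
  have hm0 : (0:ℝ) ≤ (G.edgeFinset.card : ℝ) := Nat.cast_nonneg _
  have hC0 : (0:ℝ) ≤ (C : ℝ) := Nat.cast_nonneg _
  have hAlC : (C : ℝ) ≤ Alink * C := by nlinarith
  -- case split on one-hot property
  by_cases hone : ∀ v, ∑ c : Fin C, x v c = 1
  · -- every vertex is one-hot; extract the coloring
    have hex : ∀ v, ∃ c, x v c = 1 := by
      intro v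
      by_contra h
      push_neg at h
      have : ∑ c : Fin C, x v c = 0 := Finset.sum_eq_zero fun c _ => by
        rcases hx01 v c with h' | h'
        · exact h'
        · exact absurd h' (h c)
      rw [hone v] at this; norm_num at this
    choose f hfx using hex
    have hzero : ∀ v c, c ≠ f v → x v c = 0 := by
      intro v c hc
      have hsum := hone v
      rw [← Finset.add_sum_erase _ _ (Finset.mem_univ (f v)), hfx v] at hsum
      have hrest : ∑ c ∈ Finset.univ.erase (f v), x v c = 0 := by linarith
      have := (Finset.sum_eq_zero_iff_of_nonneg (fun c _ => hx0 v c)).1 hrest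
      exact this c (Finset.mem_erase.2 ⟨hc, Finset.mem_univ c⟩)
    have hHon : Honehot C Aoh x = 0 := by simp [Honehot, hone]
    have hHli : Hlink C Alink x y = Alink * ∑ v : V, (1 - y (f v)) := by
      rw [Hlink]
      congr 1
      refine Finset.sum_congr rfl fun v _ => ?_
      rw [Finset.sum_eq_single (f v)]
      · rw [hfx v, one_mul]
      · intro c _ hc; rw [hzero v c hc, zero_mul]
      · intro h; exact absurd (Finset.mem_univ _) h
    by_cases hprop : ∀ u v, G.Adj u v → f u ≠ f v
    · -- proper coloring case
      have hk : (kmin : ℝ) ≤ ((Finset.univ.image f).card : ℝ) := hleast f hprop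
      set I := Finset.univ.image f with hI
      have hsum1 : ∑ c ∈ I, (1 - y c) ≤ ∑ v : V, (1 - y (f v)) := by
        have := Finset.sum_comp (fun c => (1 - y c)) f (s := Finset.univ)
        rw [this]
        refine Finset.sum_le_sum fun c hc => ?_
        have hfiber : 1 ≤ ({a ∈ Finset.univ | f a = c} : Finset V).card := by
          obtain ⟨v, _, hv⟩ := Finset.mem_image.1 hc
          exact Finset.card_pos.2 ⟨v, Finset.mem_filter.2 ⟨Finset.mem_univ v, hv⟩⟩
        rw [nsmul_eq_mul]
        have h1yc : 0 ≤ 1 - y c := by linarith [hy1 c]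
        have hf1 : (1:ℝ) ≤ (({a ∈ Finset.univ | f a = c} : Finset V).card : ℝ) := by
          exact_mod_cast hfiber
        nlinarith
      have hsum2 : ∑ c ∈ I, y c ≤ Hcount C y :=
        Finset.sum_le_sum_of_subset_of_nonneg (Finset.subset_univ I)
          (fun c _ _ => hy0 c)
      have hsum3 : (I.card : ℝ) ≤ ∑ c ∈ I, (y c + Alink * (1 - y c)) := by
        have hone' : (I.card : ℝ) = ∑ _c ∈ I, (1:ℝ) := by simp
        rw [hone']
        refine Finset.sum_le_sum fun c _ => ?_
        rcases hy01 c with h | h <;> rw [h] <;> nlinarith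
      have hlink2 : Alink * ∑ c ∈ I, (1 - y c) ≤ Hlink C Alink x y := by
        rw [hHli]
        exact mul_le_mul_of_nonneg_left hsum1 hAlinkpos.le
      have : (I.card : ℝ) ≤ Hcount C y + Hlink C Alink x y := by
        have := Finset.sum_add_distrib (s := I) (f := y)
          (g := fun c => Alink * (1 - y c))
        rw [← Finset.mul_sum] at this
        calc (I.card : ℝ) ≤ ∑ c ∈ I, (y c + Alink * (1 - y c)) := hsum3
          _ = ∑ c ∈ I, y c + Alink * ∑ c ∈ I, (1 - y c) := this
          _ ≤ Hcount C y + Hlink C Alink x y := add_le_add hsum2 hlink2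
      rw [HMGC]
      linarith
    · -- improper: some conflicting edge
      push_neg at hprop
      obtain ⟨u, v, hadj, hfe⟩ := hprop
      have hmem : s(u, v) ∈ G.edgeFinset := by
        rw [SimpleGraph.mem_edgeFinset, SimpleGraph.mem_edgeSet]; exact hadj
      have hterm : (1:ℝ) ≤ Sym2.lift
          ⟨fun u v => ∑ c : Fin C, x u c * x v c,
            fun _ _ => Finset.sum_congr rfl (fun _ _ => mul_comm _ _)⟩ s(u, v) := by
        simp only [Sym2.lift_mk]
        have : (1:ℝ) = x u (f u) * x v (f u) := by
          rw [hfx u, hfe, hfx v, one_mul]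
        rw [this]
        exact Finset.single_le_sum
          (fun c _ => mul_nonneg (hx0 u c) (hx0 v c)) (Finset.mem_univ (f u))
      have hAd : Aadj ≤ Hadjacency G C Aadj x := by
        rw [Hadjacency]
        have : (1:ℝ) ≤ ∑ e ∈ G.edgeFinset, Sym2.lift
            ⟨fun u v => ∑ c : Fin C, x u c * x v c,
              fun _ _ => Finset.sum_congr rfl (fun _ _ => mul_comm _ _)⟩ e :=
          le_trans hterm (Finset.single_le_sum (fun e _ => hedgeterm e) hmem)
        nlinarith
      rw [HMGC]
      nlinarith
  · -- some vertex not one-hot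
    push_neg at hone
    obtain ⟨v0, hv0⟩ := hone
    have hnat : ∃ k : ℕ, ∑ c : Fin C, x v0 c = (k : ℝ) := by
      refine ⟨({c ∈ Finset.univ | x v0 c = 1} : Finset (Fin C)).card, ?_⟩
      rw [Finset.card_filter]
      push_cast
      refine Finset.sum_congr rfl fun c _ => ?_
      rcases hx01 v0 c with h | h <;> simp [h]
    obtain ⟨k, hk⟩ := hnat
    have hkne : k ≠ 1 := by
      intro h; rw [h] at hk; exact hv0 (by rw [hk]; norm_num)
    have hsq : (1:ℝ) ≤ (1 - ∑ c : Fin C, x v0 c) ^ 2 := by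
      rw [hk]
      rcases Nat.lt_or_ge k 1 with h | h
      · interval_cases k; norm_num
      · have hk2 : 2 ≤ k := by omega
        have : (2:ℝ) ≤ (k : ℝ) := by exact_mod_cast hk2
        nlinarith
    have hOn : Aoh ≤ Honehot C Aoh x := by
      rw [Honehot]
      have hs1 : (1:ℝ) ≤ ∑ v : V, (1 - ∑ c : Fin C, x v c) ^ 2 :=
        le_trans hsq (Finset.single_le_sum (f := fun v => (1 - ∑ c : Fin C, x v c) ^ 2) (fun v _ => sq_nonneg _) (Finset.mem_univ v0))
      calc Aoh = Aoh * 1 := (mul_one _).symm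
        _ ≤ Aoh * ∑ v : V, (1 - ∑ c : Fin C, x v c) ^ 2 :=
          mul_le_mul_of_nonneg_left hs1 hAohpos.le
    have hAm : (0:ℝ) ≤ Aadj * (G.edgeFinset.card : ℝ) := mul_nonneg hAadjpos.le hm0
    rw [HMGC]
    linarith



set_option maxHeartbeats 800000 in
/-- Under the sufficient penalty conditions and `C ≥ Δ(G)+1`, the minimum of
`H_MGC` over all binary assignments equals the minimum number of distinct
colors used by a proper coloring of `G` with at most `C` colors. -/
theorem min_HMGC_eq_min_color_count
    {V : Type*} [Fintype V] [DecidableEq V] [Nonempty V]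
    (G : SimpleGraph V) [DecidableRel G.Adj]
    (C : ℕ) (hC : 1 ≤ C) (hCdeg : G.maxDegree + 1 ≤ C)
    (Aoh Aadj Alink : ℝ)
    (hAohpos : 0 < Aoh) (hAadjpos : 0 < Aadj) (hAlinkpos : 0 < Alink)
    (h1 : 1 < Alink)
    (h2 : Alink * (C : ℝ) < Aadj)
    (h3 : Aadj * (G.edgeFinset.card : ℝ) + Alink * (C : ℝ) < Aoh) :
    ∃ kmin : ℕ,
      IsLeast
        {k : ℕ | ∃ f : V → Fin C, (∀ u v, G.Adj u v → f u ≠ f v) ∧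
          (Finset.univ.image f).card = k} kmin ∧
      IsLeast
        {E : ℝ | ∃ (x : V → Fin C → ℝ) (y : Fin C → ℝ),
          (∀ v c, x v c = 0 ∨ x v c = 1) ∧ (∀ c, y c = 0 ∨ y c = 1) ∧
          HMGC G C Aoh Aadj Alink x y = E} (kmin : ℝ) := by
  classical
  obtain ⟨f0, hf0⟩ := greedy_coloring G C hC hCdeg
  set S : Set ℕ := {k : ℕ | ∃ f : V → Fin C, (∀ u v, G.Adj u v → f u ≠ f v) ∧
    (Finset.univ.image f).card = k} with hS
  have hne : S.Nonempty := ⟨(Finset.univ.image f0).card, f0, hf0, rfl⟩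
  refine ⟨sInf S, ⟨Nat.sInf_mem hne, fun k hk => Nat.sInf_le hk⟩, ?_, ?_⟩
  · -- membership: the optimal coloring realizes the energy
    obtain ⟨f, hfp, hcard⟩ := Nat.sInf_mem hne
    exact ⟨(fun v c => if f v = c then 1 else 0),
      (fun c => if c ∈ Finset.univ.image f then 1 else 0),
      fun v c => by by_cases h : f v = c <;> simp [h],
      fun c => by by_cases h : c ∈ Finset.univ.image f <;> simp [h],
      by rw [HMGC_of_coloring G C Aoh Aadj Alink f hfp, hcard]⟩
  · -- lower bound
    rintro E ⟨x, y, hx01, hy01, rfl⟩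
    have hkC : ((sInf S : ℕ) : ℝ) ≤ (C : ℝ) := by
      have h1 : sInf S ≤ (Finset.univ.image f0).card :=
        Nat.sInf_le (show (Finset.univ.image f0).card ∈ S from ⟨f0, hf0, rfl⟩)
      have h2 : (Finset.univ.image f0).card ≤ C := by
        simpa using Finset.card_le_univ (Finset.univ.image f0)
      exact_mod_cast h1.trans h2
    have hleast : ∀ f : V → Fin C, (∀ u v, G.Adj u v → f u ≠ f v) →
        ((sInf S : ℕ) : ℝ) ≤ ((Finset.univ.image f).card : ℝ) := by
      intro f hf
      exact_mod_cast Nat.sInf_le (show (Finset.univ.image f).card ∈ S from ⟨f, hf, rfl⟩)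
    exact HMGC_lower_bound G C hC Aoh Aadj Alink hAohpos hAadjpos hAlinkpos
      h1 h2 h3 (sInf S) hkC hleast x y hx01 hy01
end
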